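/- Let d ≥ 2, let F : ℝ^d → ℝ^d be continuously differentiable on a neighborhood of a point ω* with F(ω*) = ω*, let u ∈ ℝ^d be a unit vector, Π := I − u·uᵀ the orthogonal projection onto the orthogonal complement of u, let H : ℝ^d → ℝ^d be a symmetric linear map, γ > 0, and suppose the derivative of F at ω* equals Π∘(I − (1/γ)H). Let (ω_k) satisfy ω_{k+1} = F(ω_k) for all k, ω_k ≠ ω* for all k, and ω_k → ω*; set p_k := ω_k − ω*. Suppose (I − (1/γ)H)(p_k/‖p_k‖) converges to some w ∈ ℝ^d with w ∉ span{u}. Define m := min{‖γ·v − Π(H·v)‖ : ‖v‖ = 1, ⟨v,u⟩ = 0} and M := max{‖γ·v − Π(H·v)‖ : ‖v‖ = 1, ⟨v,u⟩ = 0}. Then ‖p_{k+1}‖/‖p_k‖ converges to a limit L satisfying m/γ ≤ L ≤ M/γ. -/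

import Mathlib

open scoped RealInnerProductSpace

open Filter Topology

/-! Linearising `F` at the fixed point gives `p_{k+1} / ‖p_k‖ = F'(p_k / ‖p_k‖) + o(1) → Π w`,
so the error ratio tends to `L = ‖Π w‖`, which is nonzero because `w ∉ span {u}`. The unit
errors then converge to `v = Π w / ‖Π w‖ ⊥ u`, and passing to the limit in the hypothesis on
`(I - H/γ)(p_k / ‖p_k‖)` gives `(I - H/γ) v = w`. Hence `Π w = (γ v - Π H v) / γ`, so `L` is
`‖γ v - Π H v‖ / γ` for a unit vector `v ⊥ u`, and lies between `m / γ` and `M / γ`. -/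

section Iteration

variable {E : Type*} [NormedAddCommGroup E] [NormedSpace ℝ E]

theorem HasFDerivAt.tendsto_inv_norm_smul_succ_sub_of_iterate {F : E → E} {F' : E →L[ℝ] E} {x y : E}
    (hF : HasFDerivAt F F' x) (hfix : F x = x) {ω : ℕ → E} (hiter : ∀ k, ω (k + 1) = F (ω k))
    (hconv : Tendsto ω atTop (𝓝 x))
    (hlin : Tendsto (fun k => F' (NormedSpace.normalize (ω k - x))) atTop (𝓝 y)) :
    Tendsto (fun k => ‖ω k - x‖⁻¹ • (ω (k + 1) - x)) atTop (𝓝 y) := by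
  have hrem : Tendsto (fun k => ‖ω k - x‖⁻¹ • (F (ω k) - F x - F' (ω k - x))) atTop (𝓝 0) :=
    (hF.isLittleO.comp_tendsto hconv).norm_right.tendsto_inv_smul_nhds_zero
  convert hlin.add hrem using 2 with k
  · rw [NormedSpace.normalize, map_smul, ← smul_add, hiter, hfix]
    abel_nf
  · rw [add_zero]

theorem tendsto_normalize_succ_of_tendsto_inv_norm_smul {p : ℕ → E} (hp : ∀ k, p k ≠ 0)
    {y : E} (hy : y ≠ 0) (h : Tendsto (fun k => ‖p k‖⁻¹ • p (k + 1)) atTop (𝓝 y)) :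
    Tendsto (fun k => NormedSpace.normalize (p (k + 1))) atTop (𝓝 (NormedSpace.normalize y)) := by
  have hcont : ContinuousAt (NormedSpace.normalize : E → E) y :=
    (continuous_norm.continuousAt.inv₀ (norm_ne_zero_iff.2 hy)).smul continuousAt_id
  convert hcont.tendsto.comp h using 2 with k
  exact (NormedSpace.normalize_smul_of_pos (inv_pos.2 (norm_pos_iff.2 (hp k))) _).symm

end Iteration

section NormRange

variable {E F : Type*} [NormedAddCommGroup E] [NormedAddCommGroup F]

theorem csInf_norm_apply_le (T : E → F) {P : E → Prop} {v : E} (hv : ‖v‖ = 1) (hPv : P v) :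
    sInf {r | ∃ v : E, ‖v‖ = 1 ∧ P v ∧ r = ‖T v‖} ≤ ‖T v‖ :=
  csInf_le ⟨0, by rintro _ ⟨v, -, -, rfl⟩; exact norm_nonneg _⟩ ⟨v, hv, hPv, rfl⟩

theorem norm_apply_le_csSup [NormedSpace ℝ E] [NormedSpace ℝ F] (T : E →L[ℝ] F) {P : E → Prop}
    {v : E} (hv : ‖v‖ = 1) (hPv : P v) :
    ‖T v‖ ≤ sSup {r | ∃ v : E, ‖v‖ = 1 ∧ P v ∧ r = ‖T v‖} :=
  le_csSup ⟨‖T‖, by rintro _ ⟨v, hv, -, rfl⟩; simpa [hv] using T.le_opNorm v⟩ ⟨v, hv, hPv, rfl⟩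

end NormRange

theorem Submodule.norm_starProjection_sub_smul_of_mem {E : Type*} [NormedAddCommGroup E]
    [InnerProductSpace ℝ E] {K : Submodule ℝ E} [K.HasOrthogonalProjection] {γ : ℝ}
    (hγ : 0 < γ) {v : E} (hv : v ∈ K) (x : E) :
    ‖K.starProjection (v - (1 / γ) • x)‖ = ‖γ • v - K.starProjection x‖ / γ := by
  rw [map_sub, map_smul, starProjection_eq_self_iff.2 hv, one_div,
    ← inv_smul_smul₀ hγ.ne' (v - _), smul_sub, smul_inv_smul₀ hγ.ne', norm_smul, norm_inv,
    Real.norm_of_nonneg hγ.le, inv_mul_eq_div]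

theorem stmt_16 {d : ℕ} (γ : ℝ) (hγ : 0 < γ)
    (F : EuclideanSpace ℝ (Fin d) → EuclideanSpace ℝ (Fin d))
    (ωs : EuclideanSpace ℝ (Fin d))
    (hF : ∃ U ∈ nhds ωs, ContDiffOn ℝ 1 F U) (hfix : F ωs = ωs)
    (u : EuclideanSpace ℝ (Fin d)) (hu : ‖u‖ = 1)
    (H : EuclideanSpace ℝ (Fin d) →L[ℝ] EuclideanSpace ℝ (Fin d))
    (hJ : ∀ p, fderiv ℝ F ωs p =
      (p - (1 / γ) • H p) - ⟪u, p - (1 / γ) • H p⟫ • u)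
    (ω : ℕ → EuclideanSpace ℝ (Fin d))
    (hiter : ∀ k, ω (k + 1) = F (ω k)) (hne : ∀ k, ω k ≠ ωs)
    (hconv : Filter.Tendsto ω Filter.atTop (nhds ωs))
    (w : EuclideanSpace ℝ (Fin d)) (hw : w ∉ Submodule.span ℝ {u})
    (hlim : Filter.Tendsto
      (fun k => ‖ω k - ωs‖⁻¹ • (ω k - ωs) - (1 / γ) • H (‖ω k - ωs‖⁻¹ • (ω k - ωs)))
      Filter.atTop (nhds w))
    (m M : ℝ)
    (hm : m = sInf {r : ℝ | ∃ v : EuclideanSpace ℝ (Fin d), ‖v‖ = 1 ∧ ⟪v, u⟫ = 0 ∧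
      r = ‖γ • v - (H v - ⟪u, H v⟫ • u)‖})
    (hM : M = sSup {r : ℝ | ∃ v : EuclideanSpace ℝ (Fin d), ‖v‖ = 1 ∧ ⟪v, u⟫ = 0 ∧
      r = ‖γ • v - (H v - ⟪u, H v⟫ • u)‖}) :
    ∃ L : ℝ, m / γ ≤ L ∧ L ≤ M / γ ∧
      Filter.Tendsto (fun k => ‖ω (k + 1) - ωs‖ / ‖ω k - ωs‖)
        Filter.atTop (nhds L) := by
  obtain ⟨U, hU, hCD⟩ := hF
  have hder : HasFDerivAt F (fderiv ℝ F ωs) ωs :=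
    ((hCD.contDiffAt hU).differentiableAt one_ne_zero).hasFDerivAt
  set P := (ℝ ∙ u)ᗮ.starProjection
  have hP : ∀ x, P x = x - ⟪u, x⟫ • u := fun x => by
    rw [Submodule.starProjection_orthogonal_val, Submodule.starProjection_unit_singleton ℝ hu]
  have hstep : Tendsto (fun k => ‖ω k - ωs‖⁻¹ • (ω (k + 1) - ωs)) atTop (𝓝 (P w)) :=
    hder.tendsto_inv_norm_smul_succ_sub_of_iterate hfix hiter hconv
      (by simp only [hJ, ← hP]; exact (P.continuous.tendsto w).comp hlim)
  have hPw : P w ≠ 0 := fun h => hw <| by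
    simpa [Submodule.orthogonal_orthogonal] using (Submodule.starProjection_apply_eq_zero_iff _).1 h
  set v := NormedSpace.normalize (P w)
  have hdir : Tendsto (fun k => NormedSpace.normalize (ω (k + 1) - ωs)) atTop (𝓝 v) :=
    tendsto_normalize_succ_of_tendsto_inv_norm_smul (fun k => sub_ne_zero.2 (hne k)) hPw hstep
  have hAv : v - (1 / γ) • H v = w :=
    tendsto_nhds_unique (hdir.sub (((H.continuous.tendsto v).comp hdir).const_smul _))
      (hlim.comp (tendsto_add_atTop_nat 1))
  have hv : v ∈ (ℝ ∙ u)ᗮ := Submodule.smul_mem _ _ (Submodule.starProjection_apply_mem _ _)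
  set T : EuclideanSpace ℝ (Fin d) →L[ℝ] EuclideanSpace ℝ (Fin d) :=
    γ • ContinuousLinearMap.id ℝ _ - P ∘L H
  have hL : ‖P w‖ = ‖T v‖ / γ := by
    rw [← hAv]
    exact Submodule.norm_starProjection_sub_smul_of_mem hγ hv _
  have hv1 : ‖v‖ = 1 := NormedSpace.norm_normalize hPw
  have hvu : ⟪v, u⟫ = 0 := Submodule.mem_orthogonal_singleton_iff_inner_left.1 hv
  have hT : ∀ x, γ • x - (H x - ⟪u, H x⟫ • u) = T x := fun x => by rw [← hP]; rfl
  simp only [hT] at hm hM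
  refine ⟨‖P w‖, ?_, ?_, ?_⟩
  · rw [hm, hL]
    exact div_le_div_of_nonneg_right (csInf_norm_apply_le T hv1 hvu) hγ.le
  · rw [hM, hL]
    exact div_le_div_of_nonneg_right (norm_apply_le_csSup T hv1 hvu) hγ.le
  · simpa only [norm_smul, norm_inv, norm_norm, inv_mul_eq_div] using hstep.norm
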